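/- arXiv:1903.05175 — 2 statements merged into one kernel-verified Lean document; each statement's English description precedes it below -/
import Mathlib

section
/- In the Euclidean plane E := EuclideanSpace ℝ (Fin 2), let x be a line and A, B, C points. If A and B lie on opposite sides of x, and B and C lie on the same side of x, then A and C lie on opposite sides of x. -/
/-!
A line `x` in the plane is a hyperplane: fixing `P ∈ x` and `B ∉ x`, every point is
`t • (B -ᵥ P) +ᵥ Q` with `Q ∈ x`, and it lies strictly on `B`'s side or strictly opposite
according to the sign of `t`. So two points off `x` that are not separated by `x` are
strictly on the same side in the sense of `AffineSubspace.SSameSide`, and the claim becomes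
transitivity of the side relations, `AffineSubspace.SOppSide.trans_sSameSide`.
-/

open Module

/-- `A` and `B` lie on the same side of the line `x`: neither lies on `x` and no
point of `x` is strictly between them. -/
def SameSideOfLine (x : AffineSubspace ℝ (EuclideanSpace ℝ (Fin 2)))
    (A B : EuclideanSpace ℝ (Fin 2)) : Prop :=
  A ∉ x ∧ B ∉ x ∧ ¬ ∃ P ∈ x, Sbtw ℝ A P B

/-- `A` and `B` lie on opposite sides of the line `x`: neither lies on `x` and some
point of `x` is strictly between them. -/
def OppSideOfLine (x : AffineSubspace ℝ (EuclideanSpace ℝ (Fin 2)))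
    (A B : EuclideanSpace ℝ (Fin 2)) : Prop :=
  A ∉ x ∧ B ∉ x ∧ ∃ P ∈ x, Sbtw ℝ A P B

theorem Submodule.isCoatom_of_finrank_add_one_eq {K V : Type*} [DivisionRing K]
    [AddCommGroup V] [Module K V] [FiniteDimensional K V] {W : Submodule K V}
    (h : finrank K W + 1 = finrank K V) : IsCoatom W := by
  refine ⟨fun hW => ?_, fun T hT => Submodule.eq_top_of_finrank_eq ?_⟩
  · rw [hW, finrank_top] at h
    omega
  · have := Submodule.finrank_lt_finrank_of_lt hT
    have := T.finrank_le
    omega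

namespace AffineSubspace

variable {R V P : Type*} [AddCommGroup V] [AddTorsor V P]

theorem exists_eq_smul_vsub_vadd_of_isCoatom [DivisionRing R] [Module R V]
    {s : AffineSubspace R P} {p x : P} (hs : IsCoatom s.direction) (hp : p ∈ s)
    (hx : x ∉ s) (y : P) : ∃ t : R, ∃ q ∈ s, y = t • (x -ᵥ p) +ᵥ q := by
  have hxp : x -ᵥ p ∉ s.direction := by rwa [vsub_right_mem_direction_iff_mem hp]
  have hy : y -ᵥ p ∈ s.direction ⊔ R ∙ (x -ᵥ p) := by
    rw [(Submodule.isCompl_span_singleton_of_isCoatom_of_notMem hs hxp).sup_eq_top]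
    exact Submodule.mem_top
  obtain ⟨d, hd, w, hw, hdw⟩ := Submodule.mem_sup.1 hy
  obtain ⟨t, rfl⟩ := Submodule.mem_span_singleton.1 hw
  refine ⟨t, d +ᵥ p, vadd_mem_of_mem_direction hd hp, ?_⟩
  rw [vadd_vadd, add_comm, hdw, vsub_vadd]

theorem sSameSide_or_sOppSide_of_isCoatom [Field R] [LinearOrder R] [IsStrictOrderedRing R]
    [Module R V] {s : AffineSubspace R P} {p x : P} (hs : IsCoatom s.direction) (hp : p ∈ s)
    (hx : x ∉ s) {y : P} (hy : y ∉ s) : s.SSameSide x y ∨ s.SOppSide x y := by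
  obtain ⟨t, q, hq, rfl⟩ := exists_eq_smul_vsub_vadd_of_isCoatom hs hp hx y
  rcases lt_trichotomy t 0 with ht | rfl | ht
  · exact .inr (sOppSide_smul_vsub_vadd_right hx hp hq ht)
  · simp only [zero_smul, zero_vadd] at hy
    exact absurd hq hy
  · exact .inl (sSameSide_smul_vsub_vadd_right hx hp hq ht)

end AffineSubspace

theorem oppSideOfLine_iff_sOppSide (x : AffineSubspace ℝ (EuclideanSpace ℝ (Fin 2)))
    (A B : EuclideanSpace ℝ (Fin 2)) : OppSideOfLine x A B ↔ x.SOppSide A B :=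
  ⟨fun ⟨hA, _, _, hP, h⟩ => h.sOppSide_of_notMem_of_mem hA hP,
    fun h => ⟨h.left_notMem, h.right_notMem, h.exists_sbtw⟩⟩

theorem oppSide_sameSide_oppSide
    (x : AffineSubspace ℝ (EuclideanSpace ℝ (Fin 2)))
    (hx : Module.finrank ℝ x.direction = 1)
    (A B C : EuclideanSpace ℝ (Fin 2))
    (hAB : OppSideOfLine x A B) (hBC : SameSideOfLine x B C) :
    OppSideOfLine x A C := by
  obtain ⟨hB, hC, hBC_not_sep⟩ := hBC
  obtain ⟨P, hP, -⟩ := hAB.2.2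
  have hline : IsCoatom x.direction :=
    Submodule.isCoatom_of_finrank_add_one_eq (by simp [hx])
  have hBC' : x.SSameSide B C :=
    (x.sSameSide_or_sOppSide_of_isCoatom hline hP hB hC).resolve_right
      fun h => hBC_not_sep h.exists_sbtw
  rw [oppSideOfLine_iff_sOppSide] at hAB ⊢
  exact hAB.trans_sSameSide hBC'
end

section
/- In the Euclidean plane E := EuclideanSpace ℝ (Fin 2), let x, y, z be lines (affine subspaces whose direction has finrank 1). Say two lines intersect when they are distinct and have a common point. If x and y intersect, then z intersects x or z intersects y. -/
/-- Two lines intersect: they are distinct and have a common point. -/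
def IntersectingLines (x y : AffineSubspace ℝ (EuclideanSpace ℝ (Fin 2))) : Prop :=
  x ≠ y ∧ ∃ A : EuclideanSpace ℝ (Fin 2), A ∈ x ∧ A ∈ y

/-! Two lines through a common point with the same direction coincide, so if `z` is parallel
to `x` it cannot be parallel to `y`; and in a plane, lines with different directions meet. -/

section Plane

variable {k V P : Type*} [Field k] [AddCommGroup V] [Module k V] [AddTorsor V P]

theorem Submodule.sup_eq_top_of_finrank_eq_one_of_ne [FiniteDimensional k V]
    (hV : Module.finrank k V = 2) {S T : Submodule k V}
    (hS : Module.finrank k S = 1) (hT : Module.finrank k T = 1) (hST : S ≠ T) : S ⊔ T = ⊤ := by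
  have hdisj : Disjoint S T :=
    (Submodule.isAtom_iff_finrank_eq_one.mpr hS).disjoint_of_ne
      (Submodule.isAtom_iff_finrank_eq_one.mpr hT) hST
  exact Submodule.eq_top_of_disjoint S T (by omega) hdisj

theorem AffineSubspace.nonempty_of_finrank_direction_eq_one {s : AffineSubspace k P}
    (hs : Module.finrank k s.direction = 1) : (s : Set P).Nonempty := by
  rw [AffineSubspace.nonempty_iff_ne_bot]
  rintro rfl
  rw [AffineSubspace.direction_bot, finrank_bot] at hs
  exact zero_ne_one hs

theorem AffineSubspace.inter_nonempty_of_finrank_direction_eq_one_of_direction_ne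
    [FiniteDimensional k V] (hV : Module.finrank k V = 2) {s t : AffineSubspace k P}
    (hs : Module.finrank k s.direction = 1) (ht : Module.finrank k t.direction = 1)
    (hst : s.direction ≠ t.direction) : ((s : Set P) ∩ t).Nonempty :=
  AffineSubspace.inter_nonempty_of_nonempty_of_sup_direction_eq_top
    (nonempty_of_finrank_direction_eq_one hs) (nonempty_of_finrank_direction_eq_one ht)
    (Submodule.sup_eq_top_of_finrank_eq_one_of_ne hV hs ht hst)

end Plane

theorem intersectingLines_of_direction_ne {x y : AffineSubspace ℝ (EuclideanSpace ℝ (Fin 2))}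
    (hx : Module.finrank ℝ x.direction = 1) (hy : Module.finrank ℝ y.direction = 1)
    (hxy : x.direction ≠ y.direction) : IntersectingLines x y :=
  ⟨fun h ↦ hxy (congrArg AffineSubspace.direction h),
    AffineSubspace.inter_nonempty_of_finrank_direction_eq_one_of_direction_ne
      (finrank_euclideanSpace_fin (𝕜 := ℝ)) hx hy hxy⟩

theorem intersects_cotransitive
    (x y z : AffineSubspace ℝ (EuclideanSpace ℝ (Fin 2)))
    (hx : Module.finrank ℝ x.direction = 1)
    (hy : Module.finrank ℝ y.direction = 1)
    (hz : Module.finrank ℝ z.direction = 1)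
    (hxy : IntersectingLines x y) :
    IntersectingLines z x ∨ IntersectingLines z y := by
  obtain ⟨hne, A, hAx, hAy⟩ := hxy
  by_cases hzx : z.direction = x.direction
  · have hzy : z.direction ≠ y.direction := fun h ↦
      hne ((AffineSubspace.eq_iff_direction_eq_of_mem hAx hAy).mpr (hzx ▸ h))
    exact Or.inr (intersectingLines_of_direction_ne hz hy hzy)
  · exact Or.inl (intersectingLines_of_direction_ne hz hx hzx)
end
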